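/- arXiv:2006.09194 — 3 statements merged into one kernel-verified Lean document; each statement's English description precedes it below -/
import Mathlib

section
/- For p ∈ [0.5, 0.96], the inequality (2p² + p + 2 − 2√(p² + p + 1))/(p⁴ + p³ + p²) < 1 holds. -/
/-- For `p ∈ [0.5, 0.96]`, `(2p² + p + 2 − 2√(p² + p + 1))/(p⁴ + p³ + p²) < 1`. -/
theorem stmt_11 (p : ℝ) (hp : p ∈ Set.Icc (0.5 : ℝ) 0.96) :
    (2 * p ^ 2 + p + 2 - 2 * Real.sqrt (p ^ 2 + p + 1)) / (p ^ 4 + p ^ 3 + p ^ 2)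
      < 1 := by
  obtain ⟨h1, h2⟩ := hp
  have hden : (0:ℝ) < p ^ 4 + p ^ 3 + p ^ 2 := by nlinarith
  have hs : (0:ℝ) ≤ p ^ 2 + p + 1 := by nlinarith
  set t := Real.sqrt (p ^ 2 + p + 1) with ht
  have ht0 : 0 ≤ t := Real.sqrt_nonneg _
  have ht2 : t ^ 2 = p ^ 2 + p + 1 := Real.sq_sqrt hs
  set A : ℝ := p ^ 2 + p + 2 - p ^ 4 - p ^ 3 with hA
  have h1' : (0:ℝ) ≤ p - 0.5 := by linarith
  have h2' : (0:ℝ) ≤ 0.96 - p := by linarith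
  have hApos : 0 < A := by
    rw [hA]
    nlinarith [mul_nonneg h1' h2', mul_nonneg (mul_nonneg h1' h2') (sq_nonneg p), sq_nonneg p]
  have hsq : (2 * t - A) * (2 * t + A) > 0 := by
    nlinarith [mul_nonneg h1' h2', mul_nonneg (mul_nonneg h1' h2') (sq_nonneg p),
      mul_nonneg (mul_nonneg h1' h2') (mul_nonneg (sq_nonneg p) (sq_nonneg p)),
      mul_nonneg (mul_nonneg h1' h1') (mul_nonneg h2' h2'),
      mul_nonneg (mul_nonneg (mul_nonneg h1' h2') (sq_nonneg p)) (sq_nonneg p),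
      sq_nonneg (p - 1/2), sq_nonneg (p^2 - 1)]
  have hkey : 2 * t > A := by nlinarith
  rw [div_lt_one hden]
  linarith
end

section
/- Define v(α, σ, p, χ) = p²(p+1) − ⟨X − S, X − S⟩·p − (⟨(−sin(α−σ), cos(α−σ)), X − S⟩)², where X = (√(p+p²)cos χ, −p sin χ) and S = (2 sin α − sin(α−σ), 1 − 2cos α + cos(α−σ)). Then on the region C̃ = {(α,σ,p,χ) : 0 ≤ α ≤ arctan(√(M+M²)), 0 ≤ σ ≤ π, m ≤ p ≤ M, 0 ≤ χ ≤ π/2, tan²α ≤ 2p + p²} with m = 0.5 and M = 0.96, the partial derivative of v with respect to σ satisfies |∂v/∂σ| ≤ 12 + 14M + 4M². -/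
open Real

/-!
Write `D(s) = X − S(s)`, `e = (cos (α − s), sin (α − s))` and `n = (−sin (α − s), cos (α − s))`.
Then `D' = −e` and `n' = e`, and since `⟨n, e⟩ = 0` one gets
`∂v/∂σ = 2 (p − ⟨n, D⟩) ⟨e, D⟩`. Both inner products are bounded by `‖D‖`, and
`‖D‖ ≤ ‖X − S₀‖ + 1` with `S₀ = (2 sin α, 1 − 2 cos α)`. For `α ≤ π/3` the vectors `X` and `S₀` make
a non-obtuse angle, so `‖X − S₀‖² ≤ ‖X‖² + ‖S₀‖² ≤ (p + p²) + 3 < 2.21²`. Hence `‖D‖ ≤ 3.21` and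
`|∂v/∂σ| ≤ 2 (p + 3.21) · 3.21 < 27`.
-/

theorem hasDerivAt_sub_sq_norm_mul_sub_sq_inner (q p a b c d α σ : ℝ) :
    HasDerivAt (fun s : ℝ =>
      q - ((a - (c - sin (α - s))) ^ 2 + (b - (d + cos (α - s))) ^ 2) * p
        - (-sin (α - s) * (a - (c - sin (α - s))) + cos (α - s) * (b - (d + cos (α - s)))) ^ 2)
      (2 * (p - (-sin (α - σ) * (a - (c - sin (α - σ))) + cos (α - σ) * (b - (d + cos (α - σ)))))
        * (cos (α - σ) * (a - (c - sin (α - σ))) + sin (α - σ) * (b - (d + cos (α - σ))))) σ := by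
  have hu : HasDerivAt (fun s : ℝ => α - s) (-1) σ := by
    simpa using (hasDerivAt_id σ).const_sub α
  have hsin : HasDerivAt (fun s => sin (α - s)) (cos (α - σ) * -1) σ :=
    (hasDerivAt_sin (α - σ)).comp σ hu
  have hcos : HasDerivAt (fun s => cos (α - s)) (-sin (α - σ) * -1) σ :=
    (hasDerivAt_cos (α - σ)).comp σ hu
  have hD₁ := ((hasDerivAt_const σ c).sub hsin).const_sub a
  have hD₂ := ((hasDerivAt_const σ d).add hcos).const_sub b
  refine (((hasDerivAt_const σ q).sub (((hD₁.pow 2).add (hD₂.pow 2)).mul_const p)).sub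
    (((hsin.neg.mul hD₁).add (hcos.mul hD₂)).pow 2)).congr_deriv ?_
  simp only [Pi.add_apply, Pi.sub_apply, Pi.mul_apply, Pi.neg_apply]
  ring

theorem rotate_sq_add_sq (θ x y : ℝ) :
    (cos θ * x + sin θ * y) ^ 2 + (-sin θ * x + cos θ * y) ^ 2 = x ^ 2 + y ^ 2 := by
  linear_combination (x ^ 2 + y ^ 2) * sin_sq_add_cos_sq θ

theorem abs_two_mul_sub_mul_le {p t k r : ℝ} (hp : 0 ≤ p) (hr : 0 ≤ r)
    (ht : t ^ 2 ≤ r ^ 2) (hk : k ^ 2 ≤ r ^ 2) :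
    |2 * (p - t) * k| ≤ 2 * (p + r) * r := by
  have ht' := abs_le_of_sq_le_sq ht hr
  have hk' := abs_le_of_sq_le_sq hk hr
  calc |2 * (p - t) * k| = 2 * |p - t| * |k| := by rw [abs_mul, abs_mul, abs_two]
    _ ≤ 2 * (p + r) * r := by
      gcongr
      exact (abs_sub _ _).trans (by rw [abs_of_nonneg hp]; linarith)

theorem sq_add_sq_sub_unit_le {a b c d s t r : ℝ} (hr : 0 ≤ r)
    (h : (a - c) ^ 2 + (b - d) ^ 2 ≤ r ^ 2) (hst : s ^ 2 + t ^ 2 = 1) :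
    (a - (c - s)) ^ 2 + (b - (d + t)) ^ 2 ≤ (r + 1) ^ 2 := by
  have hcs : ((a - c) * s - (b - d) * t) ^ 2 ≤ r ^ 2 := by
    nlinarith [sq_nonneg ((a - c) * t + (b - d) * s)]
  have hcs' := (abs_le_of_sq_le_sq' hcs hr).2
  nlinarith

theorem sq_add_sq_sub_le_of_le_pi_div_three {p α χ : ℝ} (hp : 0 ≤ p) (hα : 0 ≤ α) (hα' : α ≤ π / 3)
    (hχ : 0 ≤ χ) (hχ' : χ ≤ π / 2) :
    (√(p + p ^ 2) * cos χ - 2 * sin α) ^ 2 + (-p * sin χ - (1 - 2 * cos α)) ^ 2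
      ≤ p + p ^ 2 + 3 := by
  have hcosα : 1 / 2 ≤ cos α := by
    rw [← cos_pi_div_three]
    exact cos_le_cos_of_nonneg_of_le_pi hα (by linarith [pi_pos]) hα'
  have hsinα : 0 ≤ sin α := sin_nonneg_of_nonneg_of_le_pi hα (by linarith [pi_pos])
  have hsinχ : 0 ≤ sin χ := sin_nonneg_of_nonneg_of_le_pi hχ (by linarith [pi_pos])
  have hcosχ : 0 ≤ cos χ := cos_nonneg_of_mem_Icc ⟨by linarith [pi_pos], hχ'⟩
  have hsq : √(p + p ^ 2) ^ 2 = p + p ^ 2 := sq_sqrt (by positivity)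
  nlinarith [sin_sq_add_cos_sq α, sin_sq_add_cos_sq χ, sqrt_nonneg (p + p ^ 2),
    mul_nonneg (mul_nonneg (sqrt_nonneg (p + p ^ 2)) hcosχ) hsinα,
    mul_nonneg (mul_nonneg hp hsinχ) (by linarith : (0 : ℝ) ≤ 2 * cos α - 1),
    mul_nonneg hp (sq_nonneg (sin χ))]

theorem arctan_sqrt_le_pi_div_three {x : ℝ} (hx : x ≤ 3) : arctan √x ≤ π / 3 :=
  arctan_sqrt_three ▸ arctan_mono (sqrt_le_sqrt hx)

theorem stmt_17_general (α σ p χ : ℝ)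
    (hα : 0 ≤ α) (hα' : α ≤ arctan (Real.sqrt (0.96 + 0.96 ^ 2)))
    (hp : 0.5 ≤ p) (hp' : p ≤ 0.96)
    (hχ : 0 ≤ χ) (hχ' : χ ≤ π / 2) :
    |deriv (fun s : ℝ =>
      p ^ 2 * (p + 1)
      - ((Real.sqrt (p + p ^ 2) * cos χ - (2 * sin α - sin (α - s))) ^ 2
          + (-p * sin χ - (1 - 2 * cos α + cos (α - s))) ^ 2) * p
      - (-sin (α - s) * (Real.sqrt (p + p ^ 2) * cos χ - (2 * sin α - sin (α - s)))
          + cos (α - s) * (-p * sin χ - (1 - 2 * cos α + cos (α - s)))) ^ 2) σ|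
      ≤ 12 + 14 * 0.96 + 4 * 0.96 ^ 2 := by
  rw [(hasDerivAt_sub_sq_norm_mul_sub_sq_inner _ _ _ _ _ _ _ σ).deriv]
  have hα₃ : α ≤ π / 3 := hα'.trans (arctan_sqrt_le_pi_div_three (by norm_num))
  have hS₀ := (sq_add_sq_sub_le_of_le_pi_div_three (by linarith) hα hα₃ hχ hχ').trans
    (show p + p ^ 2 + 3 ≤ 2.21 ^ 2 by nlinarith)
  have hD := sq_add_sq_sub_unit_le (by norm_num) hS₀ (sin_sq_add_cos_sq (α - σ))
  have hn := rotate_sq_add_sq (α - σ) (√(p + p ^ 2) * cos χ - (2 * sin α - sin (α - σ)))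
    (-p * sin χ - (1 - 2 * cos α + cos (α - σ)))
  refine (abs_two_mul_sub_mul_le (r := 2.21 + 1) (by linarith) (by norm_num) ?_ ?_).trans ?_
  all_goals nlinarith

/-- Bound `|∂v/∂σ| ≤ 12 + 14M + 4M²` on the region `C̃` with `m = 0.5`, `M = 0.96`. -/
theorem stmt_17 (α σ p χ : ℝ)
    (hα : 0 ≤ α) (hα' : α ≤ arctan (Real.sqrt (0.96 + 0.96 ^ 2)))
    (hσ : 0 ≤ σ) (hσ' : σ ≤ π)
    (hp : 0.5 ≤ p) (hp' : p ≤ 0.96)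
    (hχ : 0 ≤ χ) (hχ' : χ ≤ π / 2)
    (htan : tan α ^ 2 ≤ 2 * p + p ^ 2) :
    |deriv (fun s : ℝ =>
      p ^ 2 * (p + 1)
      - ((Real.sqrt (p + p ^ 2) * cos χ - (2 * sin α - sin (α - s))) ^ 2
          + (-p * sin χ - (1 - 2 * cos α + cos (α - s))) ^ 2) * p
      - (-sin (α - s) * (Real.sqrt (p + p ^ 2) * cos χ - (2 * sin α - sin (α - s)))
          + cos (α - s) * (-p * sin χ - (1 - 2 * cos α + cos (α - s)))) ^ 2) σ|
      ≤ 12 + 14 * 0.96 + 4 * 0.96 ^ 2 :=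
  stmt_17_general α σ p χ hα hα' hp hp' hχ hχ'
end

section
/- With X = (√(p+p²)cos χ, −p sin χ), C = (2 sin α, 1 − 2cos α), and α_max = arctan(√(2p+p²)): for 0 ≤ α ≤ α_max, 0 ≤ χ ≤ π/2, and 0 < p, one has ‖X − C‖ ≤ 1 + p. In particular at χ = π/2 and α = α_max, ‖X − C‖² = (1+p)². -/
open Real

/-!
Write `u = sin χ`, `v = cos χ`, `s = sin α`, `c = cos α`, `q = √(p+p²)`. Expanding with
`u² + v² = 1`, `s² + c² = 1` gives `‖X − C‖² = (1+p)² − (4qvs − M)` with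
`M = 4 − p(1−u)² − 4c(1+pu)`. The constraint on `α` is `c(1+p) ≥ 1`, under which
`M ≤ 4(1−c)` and `M ≤ 4p(1−u)`; the product of these bounds is at most `(4qvs)²`, so `M ≤ 4qvs`.
At `χ = π/2`, `α = α_max` both `qvs` and `M` vanish, whence the equality.
-/

lemma le_of_le_of_le_of_mul_le_sq {M x y w : ℝ} (hx : M ≤ x) (hy : M ≤ y) (hw : 0 ≤ w)
    (hxy : x * y ≤ w ^ 2) : M ≤ w := by
  rcases le_or_gt M 0 with hM | hM
  · linarith
  · nlinarith [mul_le_mul hx hy hM.le (hM.le.trans hx)]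

section EllipseCircle

variable {p q u v s c : ℝ}

lemma ellipse_circle_dist_sq_eq (hq : q ^ 2 = p + p ^ 2) (huv : u ^ 2 + v ^ 2 = 1)
    (hsc : s ^ 2 + c ^ 2 = 1) :
    (q * v - 2 * s) ^ 2 + (-p * u - (1 - 2 * c)) ^ 2
      = (1 + p) ^ 2 - (4 * (q * v * s) - (4 - p * (1 - u) ^ 2 - 4 * c * (1 + p * u))) := by
  linear_combination v ^ 2 * hq + (p + p ^ 2) * huv + 4 * hsc

lemma ellipse_circle_dist_sq_le (hp : 0 < p) (hq0 : 0 ≤ q) (hq : q ^ 2 = p + p ^ 2)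
    (hu : 0 ≤ u) (hv : 0 ≤ v) (huv : u ^ 2 + v ^ 2 = 1)
    (hs : 0 ≤ s) (hsc : s ^ 2 + c ^ 2 = 1) (hc : 1 ≤ (1 + p) * c) :
    (q * v - 2 * s) ^ 2 + (-p * u - (1 - 2 * c)) ^ 2 ≤ (1 + p) ^ 2 := by
  have hu1 : u ≤ 1 := by nlinarith
  have hc1 : c ≤ 1 := by nlinarith
  have hc0 : 0 ≤ c := by nlinarith
  have hb : 0 ≤ p * (1 - u) := mul_nonneg hp.le (by linarith)
  have h_le_c : 4 - p * (1 - u) ^ 2 - 4 * c * (1 + p * u) ≤ 4 * (1 - c) := by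
    nlinarith [mul_nonneg hb (sub_nonneg.2 hc1), mul_nonneg hb hb]
  have h_le_u : 4 - p * (1 - u) ^ 2 - 4 * c * (1 + p * u) ≤ 4 * (p * (1 - u)) := by
    nlinarith [mul_nonneg hb hc0, mul_nonneg hb (sub_nonneg.2 hu1)]
  have h_prod : 4 * (1 - c) * (4 * (p * (1 - u))) ≤ (4 * (q * v * s)) ^ 2 := by
    have hw : (q * v * s) ^ 2 = p * (1 + p) * (1 - u ^ 2) * (1 - c ^ 2) := by
      rw [mul_pow, mul_pow, hq]
      linear_combination (p + p ^ 2) * s ^ 2 * huv + p * (1 + p) * (1 - u ^ 2) * hsc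
    have hpos : 0 ≤ (1 - c) * (p * (1 - u)) := mul_nonneg (by linarith) hb
    rw [mul_pow, hw]
    nlinarith [mul_nonneg (mul_nonneg hpos hp.le) (add_nonneg hu hc0),
      mul_nonneg hpos (mul_nonneg hu hc0), mul_nonneg (mul_nonneg hpos hp.le) (mul_nonneg hu hc0)]
  have hM := le_of_le_of_le_of_mul_le_sq h_le_c h_le_u (by positivity) h_prod
  rw [ellipse_circle_dist_sq_eq hq huv hsc]
  linarith

end EllipseCircle

lemma cos_arctan_sqrt_two_mul_add_sq {p : ℝ} (hp : 0 ≤ p) :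
    cos (arctan √(2 * p + p ^ 2)) = (1 + p)⁻¹ := by
  rw [cos_arctan, sq_sqrt (by positivity), show 1 + (2 * p + p ^ 2) = (1 + p) ^ 2 by ring,
    sqrt_sq (by linarith), one_div]

/-- With `X = (√(p+p²)cos χ, −p sin χ)` and `C = (2 sin α, 1 − 2 cos α)`:
for `0 ≤ α ≤ arctan √(2p+p²)`, `0 ≤ χ ≤ π/2` and `p > 0` we have `‖X − C‖ ≤ 1 + p`,
and at `χ = π/2`, `α = arctan √(2p+p²)` the squared norm equals `(1+p)²`. -/
theorem stmt_18 (p : ℝ) (hp : 0 < p) :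
    (∀ α χ : ℝ, 0 ≤ α → α ≤ arctan (Real.sqrt (2 * p + p ^ 2)) →
      0 ≤ χ → χ ≤ π / 2 →
      Real.sqrt ((Real.sqrt (p + p ^ 2) * cos χ - 2 * sin α) ^ 2
        + (-p * sin χ - (1 - 2 * cos α)) ^ 2) ≤ 1 + p) ∧
    ((Real.sqrt (p + p ^ 2) * cos (π / 2) - 2 * sin (arctan (Real.sqrt (2 * p + p ^ 2)))) ^ 2
      + (-p * sin (π / 2) - (1 - 2 * cos (arctan (Real.sqrt (2 * p + p ^ 2))))) ^ 2
      = (1 + p) ^ 2) := by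
  have hq := sq_sqrt (show 0 ≤ p + p ^ 2 by positivity)
  have hcos_max := cos_arctan_sqrt_two_mul_add_sq hp.le
  have harctan_lt := arctan_lt_pi_div_two √(2 * p + p ^ 2)
  refine ⟨fun α χ hα0 hα hχ0 hχ => ?_, ?_⟩
  · have hc : (1 + p)⁻¹ ≤ cos α :=
      hcos_max ▸ cos_le_cos_of_nonneg_of_le_pi hα0 (by linarith [pi_pos]) hα
    rw [← sqrt_sq (by linarith : 0 ≤ 1 + p)]
    refine sqrt_le_sqrt (ellipse_circle_dist_sq_le hp (sqrt_nonneg _) hq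
      (sin_nonneg_of_nonneg_of_le_pi hχ0 (by linarith [pi_pos]))
      (cos_nonneg_of_mem_Icc ⟨by linarith [pi_pos], hχ⟩) (sin_sq_add_cos_sq χ)
      (sin_nonneg_of_nonneg_of_le_pi hα0 (by linarith [pi_pos])) (sin_sq_add_cos_sq α) ?_)
    rwa [inv_le_iff_one_le_mul₀' (by linarith)] at hc
  · rw [ellipse_circle_dist_sq_eq hq (by simp) (sin_sq_add_cos_sq _), hcos_max, cos_pi_div_two,
      sin_pi_div_two]
    field_simp
    ring
end
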